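/- Let p be a path in a static graph G with n nodes, and suppose the complete path decomposition C_p of p satisfies Assumption A: all elementary circuits of C_p have nonzero shift, and no two distinct elementary circuits of C_p have both the same source node and the same shift. Let t be the canonical path composition of C_p, i.e., the path obtained from p by, for each shift value s from −n to n and each source node in order, moving every removed occurrence of each negative-shift elementary circuit as late as possible and every removed occurrence of each positive-shift elementary circuit as early as possible among the factors (endpoints matching at each step). Then lshift(t) ≥ lshift(p) − n. -/

import Mathlib

namespace Periodic

/-- An arc of a static graph: a source node, a target node, and a shift. -/
structure Arc (n : ℕ) where
  src : Fin n
  tgt : Fin n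
  shift : ℤ
deriving DecidableEq

/-- A static graph on `n` nodes, given by three matrices with entries in `ℚ ∪ {-∞}`. -/
structure StaticGraph (n : ℕ) where
  Mneg : Matrix (Fin n) (Fin n) (WithBot ℚ)
  Mzero : Matrix (Fin n) (Fin n) (WithBot ℚ)
  Mpos : Matrix (Fin n) (Fin n) (WithBot ℚ)

/-- The matrix associated to shift `s` (the all `-∞` matrix if `s ∉ {-1,0,1}`). -/
def StaticGraph.M {n : ℕ} (G : StaticGraph n) (s : ℤ) : Matrix (Fin n) (Fin n) (WithBot ℚ) :=
  if s = -1 then G.Mneg else if s = 0 then G.Mzero else if s = 1 then G.Mpos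
  else Matrix.of fun _ _ => ⊥

/-- `e` is an arc of `G` iff the corresponding matrix entry is not `-∞`. -/
def StaticGraph.IsArc {n : ℕ} (G : StaticGraph n) (e : Arc n) : Prop :=
  G.M e.shift e.tgt e.src ≠ ⊥

/-- The (rational) weight of an arc. -/
def StaticGraph.w {n : ℕ} (G : StaticGraph n) (e : Arc n) : ℚ :=
  WithBot.unbotD 0 (G.M e.shift e.tgt e.src)

/-- A path in the static graph `G`: a first node together with a compatible list of arcs. -/
structure SPath {n : ℕ} (G : StaticGraph n) where
  first : Fin n
  arcs : List (Arc n)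
  valid : ∀ e ∈ arcs, G.IsArc e
  startOk : ∀ e ∈ arcs.head?, e.src = first
  chainOk : arcs.Chain' (fun e f => e.tgt = f.src)

namespace SPath

variable {n : ℕ} {G : StaticGraph n}

/-- The last node of a path. -/
def last (p : SPath G) : Fin n := (p.arcs.getLast?).elim p.first Arc.tgt

/-- The length of a path. -/
def len (p : SPath G) : ℕ := p.arcs.length

/-- The shift of a path. -/
def shift (p : SPath G) : ℤ := (p.arcs.map Arc.shift).sum

/-- The weight of a path. -/
def weight (p : SPath G) : ℚ := (p.arcs.map G.w).sum

/-- The sum of the shifts of the first `i` arcs of a path. -/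
def prefixShift (p : SPath G) (i : ℕ) : ℤ := ((p.arcs.take i).map Arc.shift).sum

/-- The left-shift of a path: the minimum of all prefix sums of arc shifts. -/
def lshift (p : SPath G) : ℤ :=
  Finset.univ.inf' Finset.univ_nonempty
    (fun i : Fin (p.arcs.length + 1) => p.prefixShift i)

/-- A path is a circuit if its first and last nodes coincide. -/
def IsCircuit (p : SPath G) : Prop := p.first = p.last

/-- The sequence of nodes visited by a path. -/
def nodes (p : SPath G) : List (Fin n) := p.first :: p.arcs.map Arc.tgt

/-- An elementary circuit: a nonempty circuit whose nodes, except the last one,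
are pairwise distinct. -/
def IsElemCircuit (p : SPath G) : Prop :=
  p.IsCircuit ∧ p.arcs ≠ [] ∧ p.nodes.dropLast.Nodup

/-- Concatenation of two paths with matching endpoints. -/
def append (p q : SPath G) (h : q.first = p.last) : SPath G where
  first := p.first
  arcs := p.arcs ++ q.arcs
  valid := by
    intro e he
    rcases List.mem_append.mp he with h' | h'
    · exact p.valid e h'
    · exact q.valid e h'
  startOk := by
    intro e he
    cases hp : p.arcs with
    | nil =>
      rw [hp] at he
      simp only [List.nil_append] at he
      rw [q.startOk e he, h]
      simp [SPath.last, hp]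
    | cons a l =>
      rw [hp] at he
      simp only [List.cons_append, List.head?_cons, Option.mem_def, Option.some.injEq] at he
      subst he
      exact p.startOk a (by rw [hp]; rfl)
  chainOk := by
    apply List.IsChain.append p.chainOk q.chainOk
    intro x hx y hy
    have h1 : y.src = q.first := q.startOk y hy
    have hx' : p.arcs.getLast? = some x := hx
    have h2 : p.last = x.tgt := by simp [SPath.last, hx']
    show x.tgt = y.src
    rw [h1, h, h2]

theorem last_append (p q : SPath G) (h : q.first = p.last) :
    (p.append q h).last = q.last := by
  cases hq : q.arcs with
  | nil =>
    have hql : q.last = q.first := by simp [SPath.last, hq]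
    simp [SPath.append, SPath.last, hq, hql, h]
  | cons a l =>
    have hx : (a :: l).getLast? = some ((a :: l).getLast (by simp)) :=
      List.getLast?_eq_getLast (by simp)
    simp [SPath.append, SPath.last, hq, List.getLast?_append, hx]

/-- The empty path at node `i`. -/
def nil (G : StaticGraph n) (i : Fin n) : SPath G :=
  ⟨i, [], by simp, by simp, List.isChain_nil⟩

/-- Auxiliary construction for powers of a circuit. -/
def npowAux (q : SPath G) (h : q.IsCircuit) :
    (x : ℕ) → {r : SPath G // r.first = q.first ∧ r.last = q.first}
  | 0 => ⟨SPath.nil G q.first, rfl, by simp [SPath.last, SPath.nil]⟩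
  | x + 1 =>
    let r := npowAux q h x
    ⟨q.append r.1 (r.2.1.trans h), rfl, (last_append q r.1 _).trans r.2.2⟩

/-- The `x`-fold concatenation `q^x` of a circuit `q` with itself. -/
def npow (q : SPath G) (h : q.IsCircuit) (x : ℕ) : SPath G := (npowAux q h x).1

theorem npow_first (q : SPath G) (h : q.IsCircuit) (x : ℕ) :
    (npow q h x).first = q.first := (npowAux q h x).2.1

theorem npow_last (q : SPath G) (h : q.IsCircuit) (x : ℕ) :
    (npow q h x).last = q.first := (npowAux q h x).2.2

/-- Concatenation of a nonempty list of paths with matching endpoints. -/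
def concatChain (p : SPath G) :
    (l : List (SPath G)) → (p :: l).Chain' (fun a b => b.first = a.last) →
      {r : SPath G // r.first = p.first}
  | [], _ => ⟨p, rfl⟩
  | q :: l, h =>
    let rest := concatChain q l (List.isChain_cons_cons.mp h).2
    ⟨p.append rest.1 (rest.2.trans (List.isChain_cons_cons.mp h).1), rfl⟩

/-- The path `p`, started at shift `k`, visits only shifts belonging to `S`;
i.e., `(p, k)` represents a path of the `S`-periodic graph `G_S`. -/
def shiftsIn (p : SPath G) (k : ℤ) (S : Set ℤ) : Prop :=
  ∀ i ≤ p.arcs.length, k + p.prefixShift i ∈ S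

end SPath

/-- The set of positive integers (the paper's `ℕ`). -/
def Spos : Set ℤ := {k | 0 < k}

/-- The set of integers `k` with `-n ≤ k ≤ n`. -/
def Sint (n : ℕ) : Set ℤ := {k | -(n : ℤ) ≤ k ∧ k ≤ (n : ℤ)}

/-- The `S`-periodic graph `G_S` contains an `∞`-weight path: there are nodes `u, v` of `G_S`
and an infinite sequence of paths of `G_S` from `u` to `v` with strictly increasing weights. -/
def HasInfWeightPath {n : ℕ} (G : StaticGraph n) (S : Set ℤ) : Prop :=
  ∃ u v : Fin n × ℤ, ∃ (p : ℕ → SPath G) (k : ℕ → ℤ),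
    (∀ h, (p h).shiftsIn (k h) S) ∧
    (∀ h, ((p h).first, k h) = u ∧ ((p h).last, k h + (p h).shift) = v) ∧
    ∀ h, (p h).weight < (p (h + 1)).weight

/-- The `S`-periodic graph `G_S` contains a circuit with positive weight. -/
def HasPosWeightCircuit {n : ℕ} (G : StaticGraph n) (S : Set ℤ) : Prop :=
  ∃ (p : SPath G) (k : ℤ), p.shiftsIn k S ∧ p.IsCircuit ∧ p.shift = 0 ∧ 0 < p.weight

end Periodic

namespace Periodic

variable {n : ℕ} {G : StaticGraph n}

/-- The inner nodes of a path: all visited nodes except the first and the last one. -/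
def SPath.innerNodes (p : SPath G) : List (Fin n) := (p.nodes.drop 1).dropLast

/-- `p` splits as the concatenation `u q v`. -/
def Splits (p u q v : SPath G) : Prop :=
  p.first = u.first ∧ p.arcs = u.arcs ++ (q.arcs ++ v.arcs) ∧
    q.first = u.last ∧ v.first = q.last

/-- The elementary circuit `q` can be cut out of `p = u q v`: all of its inner nodes
occur somewhere else in the remaining path `u v`. -/
def Removable (p u q v : SPath G) : Prop :=
  Splits p u q v ∧ q.IsElemCircuit ∧
    ∀ x ∈ q.innerNodes, x ∈ u.nodes ∨ x ∈ v.nodes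

/-- One step of the decomposition: cut the removable elementary circuit `q` out of `p`,
obtaining `p₂`. -/
def CutStep (p p₂ q : SPath G) : Prop :=
  ∃ u v, Removable p u q v ∧ p₂.first = u.first ∧ p₂.arcs = u.arcs ++ v.arcs

/-- `IsCPD p p' Q` : `(p', Q)` is a complete path decomposition of `p`, where the
multiset `Q` records the removed elementary circuits with their multiplicities. -/
inductive IsCPD : SPath G → SPath G → Multiset (SPath G) → Prop
  | done (p : SPath G) (h : ∀ u q v, ¬ Removable p u q v) : IsCPD p p 0
  | step (p p₂ p' q : SPath G) (Q : Multiset (SPath G)) :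
      CutStep p p₂ q → IsCPD p₂ p' Q → IsCPD p p' (q ::ₘ Q)

/-- Assumption A: all circuits of the decomposition have nonzero shift, and no two distinct
circuits have both the same source node and the same shift. -/
def AssumptionA (Q : Multiset (SPath G)) : Prop :=
  (∀ q ∈ Q, q.shift ≠ 0) ∧
    ∀ q ∈ Q, ∀ r ∈ Q, q ≠ r → (q.first, q.shift) ≠ (r.first, r.shift)

/-- `ps` is a factorization of the path `p` into consecutive subpaths. -/
def IsFactorization (p : SPath G) (ps : List (SPath G)) : Prop :=
  ps ≠ [] ∧ ps.Chain' (fun a b => b.first = a.last) ∧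
    (∀ q ∈ ps.head?, q.first = p.first) ∧ p.arcs = (ps.map SPath.arcs).flatten

/-- One move of the canonical-path-composition algorithm: a factor which is a circuit with
negative shift is postponed, or a factor which is a circuit with positive shift is
anticipated. -/
inductive MoveStep : List (SPath G) → List (SPath G) → Prop
  | postpone (a b d : List (SPath G)) (c : SPath G) (hc : c.IsCircuit) (hs : c.shift < 0) :
      MoveStep (a ++ c :: (b ++ d)) (a ++ (b ++ c :: d))
  | anticipate (a b d : List (SPath G)) (c : SPath G) (hc : c.IsCircuit) (hs : 0 < c.shift) :
      MoveStep (a ++ (b ++ c :: d)) (a ++ c :: (b ++ d))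

/-- Weights of pseudo-circuits of `G_S` from node `(i, 0)` to node `(i, s)`. -/
def PCWeights (G : StaticGraph n) (S : Set ℤ) (i : Fin n) (s : ℤ) : Set ℚ :=
  {w | ∃ p : SPath G, p.shiftsIn 0 S ∧ p.first = i ∧ p.last = i ∧ p.shift = s ∧ p.weight = w}

/-- The path `r^{(h)} = q₁^{(-s₂)·h} p' q₂^{s₁·h}`. -/
def rpath (q₁ p' q₂ : SPath G)
    (hc₁ : q₁.IsCircuit) (hc₂ : q₂.IsCircuit)
    (h₁ : p'.first = q₁.last) (h₂ : q₂.first = p'.last) (h : ℕ) : SPath G :=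
  (SPath.npow q₁ hc₁ ((-q₂.shift).toNat * h)).append
    (p'.append (SPath.npow q₂ hc₂ (q₁.shift.toNat * h))
      ((SPath.npow_first q₂ hc₂ _).trans h₂))
    ((h₁.trans hc₁.symm).trans (SPath.npow_last q₁ hc₁ _).symm)

/-- `x` is a nonzero solution in `S` which is minimal (componentwise) and has minimal
carrier among nonzero solutions. -/
def isMinSol {ι : Type*} (S : Set (ι → ℕ)) (x : ι → ℕ) : Prop :=
  x ∈ S ∧ x ≠ 0 ∧
    ∀ y ∈ S, y ≠ x → y ≠ 0 → ¬ y ≤ x ∧ ¬ ({i | y i ≠ 0} ⊂ {i | x i ≠ 0})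

/-- Solutions `(y, z) ∈ ℕ₀^m × ℕ₀^(m-1)` of the Diophantine system
`z_l = ∑_{j ≤ l} s_j y_j` (for `l ∈ [1, m-1]`) and `∑_j s_j y_j = 0`. -/
def DioSol (m : ℕ) (s : Fin m → ℤ) : Set (Fin m ⊕ Fin (m - 1) → ℕ) :=
  {x | (∀ l : Fin (m - 1), (x (Sum.inr l) : ℤ) =
          ∑ j ∈ Finset.univ.filter (fun j : Fin m => (j : ℕ) ≤ (l : ℕ)),
            s j * (x (Sum.inl j) : ℤ)) ∧
       (∑ j : Fin m, s j * (x (Sum.inl j) : ℤ)) = 0}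

/-- The candidate minimal solution `x^{(i,j)}`: `y_i = -s_j/g`, `y_j = s_i/g`,
`z_l = s_i·(-s_j)/g` for `l ∈ [i, j-1]`, all other entries `0`, where `g = gcd(s_i, -s_j)`. -/
def dioMinVec (m : ℕ) (s : Fin m → ℤ) (i j : Fin m) : Fin m ⊕ Fin (m - 1) → ℕ :=
  fun l => match l with
  | Sum.inl a =>
      if a = i then (s j).natAbs / Int.gcd (s i) (s j)
      else if a = j then (s i).natAbs / Int.gcd (s i) (s j)
      else 0
  | Sum.inr a =>
      if (i : ℕ) ≤ (a : ℕ) ∧ (a : ℕ) < (j : ℕ)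
      then (s i).natAbs * ((s j).natAbs / Int.gcd (s i) (s j))
      else 0

end Periodic

open Periodic Periodic.SPath



namespace Stmt8Aux

open Periodic Periodic.SPath

variable {n : ℕ} {G : StaticGraph n}

/-- Minimum of all prefix sums of arc shifts (including the empty prefix, value 0). -/
def amin : List (Arc n) → ℤ
  | [] => 0
  | e :: l => min 0 (e.shift + amin l)

/-- Minimum of all prefix sums of factor shifts (including the empty prefix, value 0). -/
def bmin : List (SPath G) → ℤ
  | [] => 0
  | r :: l => min 0 (r.shift + bmin l)

lemma amin_nil : amin ([] : List (Arc n)) = 0 := rfl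

lemma amin_cons (e : Arc n) (l : List (Arc n)) :
    amin (e :: l) = min 0 (e.shift + amin l) := rfl

lemma bmin_nil : bmin ([] : List (SPath G)) = 0 := rfl

lemma bmin_cons (r : SPath G) (l : List (SPath G)) :
    bmin (r :: l) = min 0 (r.shift + bmin l) := rfl

lemma amin_nonpos (L : List (Arc n)) : amin L ≤ 0 := by
  cases L <;> simp [amin]

lemma bmin_nonpos (L : List (SPath G)) : bmin L ≤ 0 := by
  cases L <;> simp [bmin]

lemma amin_append (L M : List (Arc n)) :
    amin (L ++ M) = min (amin L) ((L.map Arc.shift).sum + amin M) := by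
  induction L with
  | nil =>
    have := amin_nonpos (n := n) M
    simp [amin_nil]
    omega
  | cons e l ih =>
    simp only [List.cons_append, amin_cons, ih, List.map_cons, List.sum_cons]
    omega

lemma bmin_append (L M : List (SPath G)) :
    bmin (L ++ M) = min (bmin L) ((L.map SPath.shift).sum + bmin M) := by
  induction L with
  | nil =>
    have := bmin_nonpos (G := G) M
    simp [bmin_nil]
    omega
  | cons r l ih =>
    simp only [List.cons_append, bmin_cons, ih, List.map_cons, List.sum_cons]
    omega

lemma bmin_moveStep {l l' : List (SPath G)} (h : MoveStep l l') : bmin l ≤ bmin l' := by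
  cases h with
  | postpone a b d c hc hs =>
    have hb := bmin_nonpos (G := G) b
    have hd := bmin_nonpos (G := G) d
    simp only [bmin_append, bmin_cons]
    omega
  | anticipate a b d c hc hs =>
    have hb := bmin_nonpos (G := G) b
    have hd := bmin_nonpos (G := G) d
    simp only [bmin_append, bmin_cons]
    omega

lemma moveStep_perm {l l' : List (SPath G)} (h : MoveStep l l') : l.Perm l' := by
  cases h with
  | postpone a b d c hc hs =>
    exact List.Perm.append_left a List.perm_middle.symm
  | anticipate a b d c hc hs =>
    exact List.Perm.append_left a List.perm_middle

lemma rtg_facts {l l' : List (SPath G)} (h : Relation.ReflTransGen MoveStep l l') :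
    bmin l ≤ bmin l' ∧ l.Perm l' := by
  induction h with
  | refl => exact ⟨le_rfl, List.Perm.refl _⟩
  | tail _ hstep ih =>
    exact ⟨ih.1.trans (bmin_moveStep hstep), ih.2.trans (moveStep_perm hstep)⟩

lemma amin_flatten_le (ls : List (SPath G)) :
    amin (ls.map SPath.arcs).flatten ≤ bmin ls := by
  induction ls with
  | nil => simp [amin_nil, bmin_nil]
  | cons r l ih =>
    simp only [List.map_cons, List.flatten_cons]
    rw [amin_append, bmin_cons]
    have h1 := amin_nonpos (n := n) r.arcs
    have h2 : (r.arcs.map Arc.shift).sum = r.shift := rfl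
    omega

lemma bmin_le_amin (ls : List (SPath G)) (h : ∀ r ∈ ls, -(n : ℤ) ≤ amin r.arcs) :
    bmin ls - (n : ℤ) ≤ amin (ls.map SPath.arcs).flatten := by
  induction ls with
  | nil =>
    simp only [List.map_nil, List.flatten_nil, amin_nil, bmin_nil]
    omega
  | cons r l ih =>
    simp only [List.map_cons, List.flatten_cons]
    rw [amin_append, bmin_cons]
    have h1 : -(n : ℤ) ≤ amin r.arcs := h r List.mem_cons_self
    have h2 : (r.arcs.map Arc.shift).sum = r.shift := rfl
    have h3 := ih (fun q hq => h q (List.mem_cons_of_mem r hq))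
    omega

lemma amin_le_take (L : List (Arc n)) (i : ℕ) :
    amin L ≤ ((L.take i).map Arc.shift).sum := by
  induction L generalizing i with
  | nil => simp [amin_nil]
  | cons e l ih =>
    cases i with
    | zero => simpa using amin_nonpos (e :: l)
    | succ j =>
      simp only [List.take_succ_cons, List.map_cons, List.sum_cons, amin_cons]
      have := ih j
      omega

lemma amin_exists_take (L : List (Arc n)) :
    ∃ i ≤ L.length, amin L = ((L.take i).map Arc.shift).sum := by
  induction L with
  | nil => exact ⟨0, by simp, by simp [amin_nil]⟩
  | cons e l ih =>
    obtain ⟨i, hi, he⟩ := ih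
    rcases le_or_gt 0 (e.shift + amin l) with h | h
    · refine ⟨0, by simp, ?_⟩
      simp only [amin_cons, List.take_zero, List.map_nil, List.sum_nil]
      omega
    · refine ⟨i + 1, by simpa using hi, ?_⟩
      simp only [amin_cons, List.take_succ_cons, List.map_cons, List.sum_cons, ← he]
      omega

lemma lshift_eq_amin (p : SPath G) : p.lshift = amin p.arcs := by
  obtain ⟨i, hi, he⟩ := amin_exists_take p.arcs
  apply le_antisymm
  · have hle := Finset.inf'_le (fun j : Fin (p.arcs.length + 1) => p.prefixShift j)
      (Finset.mem_univ (⟨i, by omega⟩ : Fin (p.arcs.length + 1)))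
    exact le_of_le_of_eq hle he.symm
  · exact Finset.le_inf' _ _ fun j _ => amin_le_take p.arcs j

lemma shift_ge_neg_one {e : Arc n} (h : G.IsArc e) : -1 ≤ e.shift := by
  by_contra hlt
  push_neg at hlt
  apply h
  simp only [StaticGraph.M, if_neg (by omega : ¬ e.shift = -1),
    if_neg (by omega : ¬ e.shift = 0), if_neg (by omega : ¬ e.shift = 1)]
  rfl

lemma amin_ge_neg_len (L : List (Arc n)) (h : ∀ e ∈ L, (-1 : ℤ) ≤ e.shift) :
    -(L.length : ℤ) ≤ amin L := by
  induction L with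
  | nil => simp [amin_nil]
  | cons e l ih =>
    have h1 : (-1 : ℤ) ≤ e.shift := h e List.mem_cons_self
    have h2 := ih (fun f hf => h f (List.mem_cons_of_mem e hf))
    simp only [amin_cons, List.length_cons]
    push_cast
    omega

lemma cpd_elem {p p' : SPath G} {Q : Multiset (SPath G)} (h : IsCPD p p' Q) :
    ∀ q ∈ Q, q.IsElemCircuit := by
  induction h with
  | done p hp => simp
  | step p p₂ p' q Q hcut _ ih =>
    intro r hr
    rcases Multiset.mem_cons.mp hr with h' | h'
    · subst h'
      obtain ⟨u, v, hrem, -, -⟩ := hcut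
      exact hrem.2.1
    · exact ih r h'

lemma elem_len_le {q : SPath G} (h : q.IsElemCircuit) : q.arcs.length ≤ n := by
  have hn := h.2.2
  have hlen : q.nodes.dropLast.length = q.arcs.length := by
    simp [SPath.nodes]
  calc q.arcs.length = q.nodes.dropLast.length := hlen.symm
    _ ≤ Fintype.card (Fin n) := hn.length_le_card
    _ = n := Fintype.card_fin n

end Stmt8Aux

theorem stmt8 {n : ℕ} (G : StaticGraph n) (p t p' : SPath G) (Q : Multiset (SPath G))
    (hcpd : IsCPD p p' Q) (hA : AssumptionA Q)
    (ps ts : List (SPath G))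
    (hfacp : IsFactorization p ps)
    (hfactors : ∀ r ∈ ps, r.len = 1 ∨ r ∈ Q)
    (hmoves : Relation.ReflTransGen MoveStep ps ts)
    (hfact : IsFactorization t ts) :
    p.lshift - (n : ℤ) ≤ t.lshift := by
  classical
  obtain ⟨hb, hperm⟩ := Stmt8Aux.rtg_facts hmoves
  have hQel := Stmt8Aux.cpd_elem hcpd
  have hnpos : 0 < n := p.first.pos
  have hts : ∀ r ∈ ts, -(n : ℤ) ≤ Stmt8Aux.amin r.arcs := by
    intro r hr
    have hr' : r ∈ ps := hperm.mem_iff.mpr hr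
    have hlen : r.arcs.length ≤ n := by
      rcases hfactors r hr' with h1 | h2
      · have : r.arcs.length = 1 := h1
        omega
      · exact Stmt8Aux.elem_len_le (hQel r h2)
    have h3 := Stmt8Aux.amin_ge_neg_len r.arcs
      (fun e he => Stmt8Aux.shift_ge_neg_one (r.valid e he))
    have : (r.arcs.length : ℤ) ≤ (n : ℤ) := by exact_mod_cast hlen
    omega
  have e1 : p.lshift = Stmt8Aux.amin p.arcs := Stmt8Aux.lshift_eq_amin p
  have e2 : t.lshift = Stmt8Aux.amin t.arcs := Stmt8Aux.lshift_eq_amin t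
  rw [e1, e2, hfacp.2.2.2, hfact.2.2.2]
  have h1 := Stmt8Aux.amin_flatten_le ps
  have h2 := Stmt8Aux.bmin_le_amin ts hts
  omega
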